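/- On a 2-dimensional oriented Riemannian manifold (S,ĥ), if Z satisfies Hess Z = (u∘Z)ĥ with |dZ|² = V(Z) > 0 and V' = 2u, then in local coordinates (Z, x) adapted so that the metric is ĥ = dZ²/V(Z) + V(Z)H(Z,x)² dx² with ⋆dZ = -V H dx, the Hessian equation forces ∂_Z H = 0, i.e. H depends only on x. -/

import Mathlib

open Finset

noncomputable section

/-- Partial derivative `∂_μ f` of a real-valued function on ℝⁿ (coordinates). -/
def pd {n : ℕ} (μ : Fin n) (f : (Fin n → ℝ) → ℝ) (x : Fin n → ℝ) : ℝ :=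
  fderiv ℝ f x (Pi.single μ 1)

/-- Partial derivative `∂_μ f` of a complex-valued function on ℝⁿ. -/
def pdC {n : ℕ} (μ : Fin n) (f : (Fin n → ℝ) → ℂ) (x : Fin n → ℝ) : ℂ :=
  fderiv ℝ f x (Pi.single μ 1)

/-- Christoffel symbols `Γ^α_{μν}` of a metric `g` with inverse `ginv`. -/
def chr {n : ℕ} (g ginv : (Fin n → ℝ) → Fin n → Fin n → ℝ)
    (x : Fin n → ℝ) (α μ ν : Fin n) : ℝ :=
  (1 / 2) * ∑ ρ, ginv x α ρ *
    (pd μ (fun y => g y ρ ν) x + pd ν (fun y => g y ρ μ) x - pd ρ (fun y => g y μ ν) x)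

/-- Ricci tensor `R_{σν} = R^μ{}_{σμν}` of the metric `g`. -/
def Ric {n : ℕ} (g ginv : (Fin n → ℝ) → Fin n → Fin n → ℝ)
    (x : Fin n → ℝ) (σ ν : Fin n) : ℝ :=
  ∑ μ, (pd μ (fun y => chr g ginv y μ ν σ) x - pd ν (fun y => chr g ginv y μ μ σ) x
    + ∑ l, (chr g ginv x μ μ l * chr g ginv x l ν σ - chr g ginv x μ ν l * chr g ginv x l μ σ))

/-- The covector `ξ_ν = g_{νρ} ξ^ρ` obtained by lowering the index of a vector field. -/
def lowV {n : ℕ} (g : (Fin n → ℝ) → Fin n → Fin n → ℝ) (ξ : (Fin n → ℝ) → Fin n → ℝ)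
    (x : Fin n → ℝ) (ν : Fin n) : ℝ :=
  ∑ ρ, g x ν ρ * ξ x ρ

/-- The covariant derivative `∇_μ ξ_ν` of (the covector associated to) a vector field. -/
def nablaLow {n : ℕ} (g ginv : (Fin n → ℝ) → Fin n → Fin n → ℝ)
    (ξ : (Fin n → ℝ) → Fin n → ℝ) (x : Fin n → ℝ) (μ ν : Fin n) : ℝ :=
  pd μ (fun y => lowV g ξ y ν) x - ∑ ρ, chr g ginv x ρ μ ν * lowV g ξ x ρ

end

noncomputable section

/-- The Hessian `D_A D_B Z = ∂_A ∂_B Z - Γ^C_{AB} ∂_C Z` of a function. -/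
def hess {n : ℕ} (g ginv : (Fin n → ℝ) → Fin n → Fin n → ℝ) (Z : (Fin n → ℝ) → ℝ)
    (x : Fin n → ℝ) (A B : Fin n) : ℝ :=
  pd A (fun y => pd B Z y) x - ∑ C, chr g ginv x C A B * pd C Z x

/-- The scalar curvature `R = g^{AB} Ric_{AB}`. -/
def scal {n : ℕ} (g ginv : (Fin n → ℝ) → Fin n → Fin n → ℝ) (x : Fin n → ℝ) : ℝ :=
  ∑ A, ∑ B, ginv x A B * Ric g ginv x A B

end

noncomputable section

/-- The metric `ĥ = dZ²/V(Z) + V(Z) H² dx²` in the adapted coordinates `(Z,x)`. -/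
def hmet (V : ℝ → ℝ) (H : (Fin 2 → ℝ) → ℝ) (x : Fin 2 → ℝ) (A B : Fin 2) : ℝ :=
  if A = 0 then (if B = 0 then 1 / V (x 0) else 0)
  else (if B = 1 then V (x 0) * (H x) ^ 2 else 0)

/-- The inverse of the metric `hmet`. -/
def hmetInv (V : ℝ → ℝ) (H : (Fin 2 → ℝ) → ℝ) (x : Fin 2 → ℝ) (A B : Fin 2) : ℝ :=
  if A = 0 then (if B = 0 then V (x 0) else 0)
  else (if B = 1 then 1 / (V (x 0) * (H x) ^ 2) else 0)

end


section Aux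

lemma pd_coord {n : ℕ} (μ ν : Fin n) (x : Fin n → ℝ) :
    pd μ (fun y => y ν) x = if ν = μ then 1 else 0 := by
  unfold pd
  rw [show (fun y : Fin n → ℝ => y ν)
      = ((ContinuousLinearMap.proj ν : (Fin n → ℝ) →L[ℝ] ℝ) : (Fin n → ℝ) → ℝ) from rfl,
    ContinuousLinearMap.fderiv]
  simp [Pi.single_apply]

lemma pd_const {n : ℕ} (μ : Fin n) (c : ℝ) (x : Fin n → ℝ) :
    pd μ (fun _ => c) x = 0 := by
  unfold pd
  rw [fderiv_fun_const]
  simp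

end Aux

/-- In the adapted coordinates `(Z,x)` where the metric reads
    `ĥ = dZ²/V(Z) + V(Z) H(Z,x)² dx²` with `V > 0`, `V' = 2u` and `Z` equal to the
    first coordinate, the Hessian equation `Hess Z = (u∘Z) ĥ` forces `∂_Z H = 0`. -/
theorem stmt14 (V u : ℝ → ℝ) (H : (Fin 2 → ℝ) → ℝ)
    (hVsmooth : ContDiff ℝ (⊤ : ℕ∞) V) (hVpos : ∀ t, 0 < V t)
    (hV' : ∀ t, HasDerivAt V (2 * u t) t)
    (hHsmooth : ContDiff ℝ (⊤ : ℕ∞) H) (hHpos : ∀ x, 0 < H x)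
    (hhess : ∀ x A B, hess (hmet V H) (hmetInv V H) (fun y => y 0) x A B
      = u (x 0) * hmet V H x A B) :
    ∀ x, pd 0 H x = 0  := by
  intro x
  have h := hhess x 1 1
  have e1 : (fun y : Fin 2 → ℝ => pd 1 (fun z : Fin 2 → ℝ => z 0) y) = fun _ => (0 : ℝ) := by
    funext y; rw [pd_coord]; simp
  have e2 : (fun y => hmet V H y 0 1) = fun _ => (0 : ℝ) := by
    funext y; simp [hmet]
  have e3 : pd 0 (fun y => hmet V H y 1 1) x
      = 2 * u (x 0) * (H x * H x) + V (x 0) * (2 * H x * pd 0 H x) := by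
    have e : (fun y => hmet V H y 1 1) = fun y => V (y 0) * (H y * H y) := by
      funext y; simp [hmet, pow_two]
    rw [e]
    set P : (Fin 2 → ℝ) →L[ℝ] ℝ := ContinuousLinearMap.proj 0 with hP
    have hproj : HasFDerivAt (fun y : Fin 2 → ℝ => y 0) P x := P.hasFDerivAt
    have hVy : HasFDerivAt (fun y : Fin 2 → ℝ => V (y 0))
        ((2 * u (x 0)) • P) x :=
      (hV' (x 0)).comp_hasFDerivAt x hproj
    have hHx : HasFDerivAt H (fderiv ℝ H x) x :=
      (hHsmooth.differentiable (by simp) x).hasFDerivAt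
    have hmul := hVy.mul (hHx.mul hHx)
    unfold pd
    rw [show (fun y => V (y 0) * (H y * H y)) = (fun y : Fin 2 → ℝ => V (y 0)) * (H * H) from rfl,
      hmul.fderiv]
    have hone : P (Pi.single 0 1) = 1 := by simp [hP]
    simp only [ContinuousLinearMap.add_apply, ContinuousLinearMap.smul_apply,
      smul_eq_mul, hone, Pi.mul_apply]
    ring
  unfold hess chr at h
  simp only [Fin.sum_univ_two] at h
  rw [e1, pd_const] at h
  rw [e2] at h
  rw [pd_const, e3] at h
  rw [pd_coord, pd_coord] at h
  simp only [hmet, hmetInv] at h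
  norm_num at h
  have hVp := hVpos (x 0)
  have hHp := hHpos x
  have key : V (x 0) ^ 2 * H x * pd 0 H x = 0 := by nlinarith [h]
  have hne : V (x 0) ^ 2 * H x ≠ 0 := by positivity
  exact (mul_eq_zero.mp key).resolve_left hne
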